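/- arXiv:math-ph/9902025 — 2 statements merged into one kernel-verified Lean document; each statement's English description precedes it below -/
import Mathlib

section
/- For k = 4 and all x > 0, g_4'(x) < 2(x·g_4(x) − 1), where g_4(x) = 4/(3x + √(x²+4)). -/
noncomputable def g (k : ℝ) (x : ℝ) : ℝ := k / ((k-1)*x + Real.sqrt (x^2 + k))

/-!
With `s = √(x² + 4)` and `D = 3x + s`, one has `g₄'(x) = -4 (3s + x) / (s D²)` and
`2 (x g₄(x) - 1) = 2 (x - s) / D`. Clearing denominators and using `s - x = 4 / (s + x)`,
the inequality becomes `2 s D < (3s + x)(s + x)`, i.e. `0 < (s - x)²`.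
-/

open Real

theorem hasDerivAt_g {k x : ℝ} (hxk : x ^ 2 + k ≠ 0) (hden : (k - 1) * x + √(x ^ 2 + k) ≠ 0) :
    HasDerivAt (g k)
      (-k * (k - 1 + x / √(x ^ 2 + k)) / ((k - 1) * x + √(x ^ 2 + k)) ^ 2) x := by
  have hsqrt : HasDerivAt (fun y => √(y ^ 2 + k)) (x / √(x ^ 2 + k)) x := by
    convert ((hasDerivAt_pow 2 x).add_const k).sqrt hxk using 1
    ring
  have hden' : HasDerivAt (fun y => (k - 1) * y + √(y ^ 2 + k)) (k - 1 + x / √(x ^ 2 + k)) x :=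
    (((hasDerivAt_id x).const_mul (k - 1)).add hsqrt).congr_deriv (by ring)
  exact ((hasDerivAt_const x k).div hden' hden).congr_deriv (by ring)

theorem neg_div_lt_of_sq_eq_sq_add_four {x s : ℝ} (hx : 0 < x) (hs : 0 < s) (hs2 : s ^ 2 = x ^ 2 + 4) :
    -4 * (4 - 1 + x / s) / ((4 - 1) * x + s) ^ 2 < 2 * (x * (4 / ((4 - 1) * x + s)) - 1) := by
  have hsx : x < s := by nlinarith
  have hD : 0 < 3 * x + s := by positivity
  rw [div_lt_iff₀ (by positivity)]
  field_simp
  nlinarith [mul_pos (sq_pos_of_pos (sub_pos.2 hsx)) hs]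

theorem g4_deriv_ineq : ∀ x : ℝ, 0 < x → deriv (g 4) x < 2 * (x * g 4 x - 1) := by
  intro x hx
  have hs : 0 < √(x ^ 2 + 4) := by positivity
  rw [(hasDerivAt_g (by positivity) (by norm_num; positivity)).deriv, g]
  exact neg_div_lt_of_sq_eq_sq_add_four hx hs (sq_sqrt (by positivity))
end

section
/- The function ν(x) = 1/V_0(x) is strictly convex on [0, ∞): ν''(x) > 0 for all x > 0. -/
/-!
Differentiating the Riccati equation `ν' = 2ν(ν - x)` once more gives
`ν'' = 2ν(4ν² - 6xν + 2x² - 1)`, a quadratic in `ν` whose larger root is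
`(3x + √(x² + 4))/4`, so `ν'' > 0` wherever `ν` exceeds that root. In terms of the Gaussian tail
`G(x) = ∫_x^∞ e^{-t²} dt` this lower bound reads `G(x) < 2e^{-x²}/(3x + √(x² + 4))`. It holds because
the difference of the two sides tends to `0` at infinity and is strictly decreasing on `[0, ∞)`: its
derivative has the sign of `x(x² + 3) - √(x² + 4)(x² + 1)`, and the squares of these two terms
differ by exactly `4`.
-/

noncomputable def V0 (x : ℝ) : ℝ := 2 * Real.exp (x^2) * ∫ t in Set.Ioi x, Real.exp (-t^2)

noncomputable def nu (x : ℝ) : ℝ := 1 / V0 x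

open Real MeasureTheory Set Filter Topology

theorem hasDerivAt_integral_Ioi {E : Type*} [NormedAddCommGroup E] [NormedSpace ℝ E]
    [CompleteSpace E] {f : ℝ → E} {x : ℝ} (hf : Integrable f) (hfx : ContinuousAt f x) :
    HasDerivAt (fun y => ∫ t in Ioi y, f t) (-f x) x := by
  have hsplit : (fun y => ∫ t in Ioi y, f t) =
      fun y => (∫ t in Ioi x, f t) - ∫ t in x..y, f t := by
    funext y
    exact eq_sub_of_add_eq'
      (intervalIntegral.integral_interval_add_Ioi hf.integrableOn hf.integrableOn)
  rw [hsplit]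
  exact (intervalIntegral.integral_hasDerivAt_right hf.intervalIntegrable
    hf.aestronglyMeasurable.stronglyMeasurableAtFilter hfx).const_sub _

theorem StrictAntiOn.pos_of_tendsto_zero {α β : Type*} [LinearOrder α] [NoMaxOrder α]
    [PartialOrder β] [TopologicalSpace β] [OrderClosedTopology β] [Zero β]
    {f : α → β} {a x : α} (hf : StrictAntiOn f (Ici a)) (hlim : Tendsto f atTop (𝓝 0))
    (hx : a ≤ x) : 0 < f x := by
  have : Nonempty α := ⟨x⟩
  obtain ⟨y, hxy⟩ := exists_gt x
  have hy : a ≤ y := hx.trans hxy.le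
  have hfy : 0 ≤ f y := le_of_tendsto hlim <| by
    filter_upwards [eventually_ge_atTop y] with z hz
    exact hf.antitoneOn hy (hy.trans hz) hz
  exact hfy.trans_lt (hf hx hy hxy)

theorem mul_sq_add_three_lt_sqrt_mul (x : ℝ) :
    x * (x ^ 2 + 3) < √(x ^ 2 + 4) * (x ^ 2 + 1) := by
  have hs : √(x ^ 2 + 4) ^ 2 = x ^ 2 + 4 := sq_sqrt (by positivity)
  have hdiff : (√(x ^ 2 + 4) * (x ^ 2 + 1)) ^ 2 - (x * (x ^ 2 + 3)) ^ 2 = 4 := by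
    linear_combination (x ^ 2 + 1) ^ 2 * hs
  exact (abs_lt_of_sq_lt_sq' (by linarith) (by positivity)).2

noncomputable def gaussTail (x : ℝ) : ℝ := ∫ t in Ioi x, exp (-t ^ 2)

theorem integrable_exp_neg_sq : Integrable fun t : ℝ => exp (-t ^ 2) := by
  simpa using integrable_exp_neg_mul_sq one_pos

theorem gaussTail_pos (x : ℝ) : 0 < gaussTail x := by
  refine (setIntegral_pos_iff_support_of_nonneg_ae
    (.of_forall fun t => (exp_pos _).le) integrable_exp_neg_sq.integrableOn).2 ?_
  simp [Function.support, (exp_pos _).ne']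

theorem hasDerivAt_gaussTail (x : ℝ) : HasDerivAt gaussTail (-exp (-x ^ 2)) x :=
  hasDerivAt_integral_Ioi integrable_exp_neg_sq (by fun_prop)

theorem tendsto_gaussTail_atTop : Tendsto gaussTail atTop (𝓝 0) :=
  tendsto_integral_Ioi_zero tendsto_id

theorem V0_eq (x : ℝ) : V0 x = 2 * exp (x ^ 2) * gaussTail x := rfl

theorem V0_pos (x : ℝ) : 0 < V0 x := by
  have := gaussTail_pos x
  rw [V0_eq]
  positivity

theorem hasDerivAt_V0 (x : ℝ) : HasDerivAt V0 (2 * x * V0 x - 2) x := by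
  have hexp : HasDerivAt (fun y => 2 * exp (y ^ 2)) (2 * (exp (x ^ 2) * (2 * x))) x := by
    simpa using ((hasDerivAt_pow 2 x).exp).const_mul 2
  refine (hexp.mul (hasDerivAt_gaussTail x)).congr_deriv ?_
  have hexp_mul : exp (x ^ 2) * exp (-x ^ 2) = 1 := by rw [← exp_add]; simp
  rw [V0_eq]
  linear_combination (-2) * hexp_mul

theorem nu_pos (x : ℝ) : 0 < nu x := one_div_pos.2 (V0_pos x)

theorem hasDerivAt_nu (x : ℝ) : HasDerivAt nu (2 * nu x * (nu x - x)) x := by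
  have hnu : nu = fun y => (V0 y)⁻¹ := funext fun y => one_div _
  rw [hnu]
  refine ((hasDerivAt_V0 x).inv (V0_pos x).ne').congr_deriv ?_
  have := (V0_pos x).ne'
  field_simp
  ring

theorem deriv_nu : deriv nu = fun x => 2 * nu x * (nu x - x) :=
  funext fun x => (hasDerivAt_nu x).deriv

theorem hasDerivAt_deriv_nu (x : ℝ) :
    HasDerivAt (deriv nu) (2 * nu x * (4 * nu x ^ 2 - 6 * x * nu x + 2 * x ^ 2 - 1)) x := by
  rw [deriv_nu]
  refine (((hasDerivAt_nu x).const_mul 2).mul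
    ((hasDerivAt_nu x).fun_sub (hasDerivAt_id' x))).congr_deriv ?_
  ring

noncomputable def gaussTailMajorant (x : ℝ) : ℝ := 2 * exp (-x ^ 2) / (3 * x + √(x ^ 2 + 4))

theorem hasDerivAt_gaussTailMajorant_sub_gaussTail {x : ℝ} (hx : 0 ≤ x) :
    HasDerivAt (fun y => gaussTailMajorant y - gaussTail y)
      (2 * exp (-x ^ 2) * (x * (x ^ 2 + 3) - √(x ^ 2 + 4) * (x ^ 2 + 1)) /
        (√(x ^ 2 + 4) * (3 * x + √(x ^ 2 + 4)) ^ 2)) x := by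
  have hs : 0 < √(x ^ 2 + 4) := sqrt_pos.2 (by positivity)
  have hs2 : √(x ^ 2 + 4) ^ 2 = x ^ 2 + 4 := sq_sqrt (by positivity)
  have hu : 0 < 3 * x + √(x ^ 2 + 4) := by positivity
  have hnum : HasDerivAt (fun y => 2 * exp (-y ^ 2)) (-4 * x * exp (-x ^ 2)) x := by
    refine ((hasDerivAt_pow 2 x).fun_neg.exp.const_mul 2).congr_deriv ?_
    simp only [Nat.cast_ofNat, pow_one, Nat.add_one_sub_one]
    ring
  have hsqrt : HasDerivAt (fun y => √(y ^ 2 + 4)) (x / √(x ^ 2 + 4)) x := by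
    convert ((hasDerivAt_pow 2 x).add_const 4).sqrt (by positivity) using 1
    field_simp
    ring
  have hden : HasDerivAt (fun y => 3 * y + √(y ^ 2 + 4)) (3 + x / √(x ^ 2 + 4)) x := by
    simpa using ((hasDerivAt_id x).const_mul 3).fun_add hsqrt
  refine ((hnum.fun_div hden hu.ne').fun_sub (hasDerivAt_gaussTail x)).congr_deriv ?_
  field_simp
  linear_combination (2 * x + √(x ^ 2 + 4)) * hs2

theorem strictAntiOn_gaussTailMajorant_sub_gaussTail :
    StrictAntiOn (fun x => gaussTailMajorant x - gaussTail x) (Ici 0) := by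
  refine strictAntiOn_of_deriv_neg (convex_Ici 0)
    (fun x hx => (hasDerivAt_gaussTailMajorant_sub_gaussTail hx).continuousAt.continuousWithinAt)
    fun x hx => ?_
  rw [interior_Ici, mem_Ioi] at hx
  rw [(hasDerivAt_gaussTailMajorant_sub_gaussTail hx.le).deriv]
  have hs : 0 < √(x ^ 2 + 4) := sqrt_pos.2 (by positivity)
  have hu : 0 < 3 * x + √(x ^ 2 + 4) := by linarith
  have hlt := mul_sq_add_three_lt_sqrt_mul x
  exact div_neg_of_neg_of_pos (mul_neg_of_pos_of_neg (by positivity) (by linarith))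
    (by positivity)

theorem tendsto_gaussTailMajorant_atTop : Tendsto gaussTailMajorant atTop (𝓝 0) := by
  have hnum : Tendsto (fun x : ℝ => 2 * exp (-x ^ 2)) atTop (𝓝 0) := by
    simpa using (tendsto_exp_atBot.comp
      (tendsto_neg_atTop_atBot.comp (tendsto_pow_atTop two_ne_zero))).const_mul 2
  have hden : Tendsto (fun x : ℝ => 3 * x + √(x ^ 2 + 4)) atTop atTop :=
    (tendsto_id.const_mul_atTop three_pos).atTop_add_nonneg fun x => sqrt_nonneg _
  exact hnum.div_atTop hden

theorem gaussTail_lt_gaussTailMajorant {x : ℝ} (hx : 0 ≤ x) :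
    gaussTail x < gaussTailMajorant x := by
  have hlim : Tendsto (fun x => gaussTailMajorant x - gaussTail x) atTop (𝓝 0) := by
    simpa using tendsto_gaussTailMajorant_atTop.sub tendsto_gaussTail_atTop
  exact sub_pos.1 (strictAntiOn_gaussTailMajorant_sub_gaussTail.pos_of_tendsto_zero hlim hx)

theorem three_mul_add_sqrt_div_four_lt_nu {x : ℝ} (hx : 0 ≤ x) :
    (3 * x + √(x ^ 2 + 4)) / 4 < nu x := by
  have hu : 0 < 3 * x + √(x ^ 2 + 4) := by positivity
  have hexp : exp (x ^ 2) * exp (-x ^ 2) = 1 := by rw [← exp_add]; simp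
  have hV : V0 x * (3 * x + √(x ^ 2 + 4)) < 4 := by
    have := (lt_div_iff₀ hu).1 (gaussTail_lt_gaussTailMajorant hx)
    rw [V0_eq]
    nlinarith [exp_pos (x ^ 2)]
  rw [nu, lt_div_iff₀ (V0_pos x)]
  linarith

theorem deriv_deriv_nu_pos {x : ℝ} (hx : 0 ≤ x) : 0 < deriv (deriv nu) x := by
  rw [(hasDerivAt_deriv_nu x).deriv]
  have hs : 0 < √(x ^ 2 + 4) := sqrt_pos.2 (by positivity)
  have hs2 : √(x ^ 2 + 4) ^ 2 = x ^ 2 + 4 := sq_sqrt (by positivity)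
  have hfactor : 4 * nu x ^ 2 - 6 * x * nu x + 2 * x ^ 2 - 1 =
      4 * (nu x - (3 * x + √(x ^ 2 + 4)) / 4) * (nu x - (3 * x - √(x ^ 2 + 4)) / 4) := by
    linear_combination (1 / 4) * hs2
  have hlt := three_mul_add_sqrt_div_four_lt_nu hx
  have := nu_pos x
  have hroot₁ : 0 < nu x - (3 * x + √(x ^ 2 + 4)) / 4 := by linarith
  have hroot₂ : 0 < nu x - (3 * x - √(x ^ 2 + 4)) / 4 := by linarith
  rw [hfactor]
  positivity

theorem nu_strictConvex :
    StrictConvexOn ℝ (Set.Ici (0:ℝ)) nu ∧ ∀ x : ℝ, 0 < x → 0 < deriv (deriv nu) x :=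
  ⟨strictConvexOn_of_deriv2_pos' (convex_Ici 0)
      (fun x _ => (hasDerivAt_nu x).continuousAt.continuousWithinAt)
      fun _ hx => deriv_deriv_nu_pos hx,
    fun _ hx => deriv_deriv_nu_pos hx.le⟩
end
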